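/- arXiv:1802.03304 — 3 statements merged into one kernel-verified Lean document; each statement's English description precedes it below -/
import Mathlib

section
/- If the chain (b_1, …, b_r) of integers with all b_i ≥ 2 is of class T, then so is the chain (2, b_1, …, b_{r−1}, b_r + 1), obtained by prepending an entry 2 and increasing the last entry by 1. -/
/-- The Hirzebruch–Jung continued fraction value [c_1, …, c_t] of a list of
rationals, defined by [c_t] = c_t and [c_i, …, c_t] = c_i − 1/[c_{i+1}, …, c_t].
(For the empty list we set the value to 0; since 1/0 = 0 in ℚ, this gives
`hj [c] = c`.) -/
def hj : List ℚ → ℚ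
  | [] => 0
  | c :: rest => c - 1 / hj rest

/-- A chain (b_1, …, b_r) of integers with all b_i ≥ 2 is of class T if
[b_1, …, b_r] = dn²/(dna − 1) for some integers d ≥ 1, n ≥ 2, 1 ≤ a < n with
gcd(n, a) = 1. -/
def IsClassT (l : List ℤ) : Prop :=
  (∀ b ∈ l, 2 ≤ b) ∧
    ∃ d n a : ℤ, 1 ≤ d ∧ 2 ≤ n ∧ 1 ≤ a ∧ a < n ∧ Int.gcd n a = 1 ∧
      hj (l.map (fun b => (b : ℚ))) = (d * n ^ 2 : ℚ) / (d * n * a - 1)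

/-!
The map `x ↦ [c₁, …, c_t, x]` is the Möbius transformation of the unimodular matrix
`[[p, q], [r, s]] = ∏ᵢ [[cᵢ, -1], [1, 0]]`. Write the chain as `(c₁, …, c_t, m)`. Since `ps - qr = 1`,
the value `(pm + q)/(rm + s)` is in lowest terms, hence `pm + q = dn²` and `rm + s = dna - 1`.
The same determinant identity makes `p ∈ [0, dn²)` an inverse of `dna - 1` modulo `dn²`; so is
`dn² - dna - 1`, because `(dna)² ≡ 0`. Hence `p = dn² - dna - 1`, `r = dna - 1 - da²`, and
`[c₁, …, c_t, m + 1] = (dn² + p)/(dna - 1 + r) = (dn(2n - a) - 1)/(da(2n - a) - 2)`, so that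
`[2, c₁, …, c_t, m + 1] = d(2n - a)²/(d(2n - a)n - 1)`: the new chain is of class T with
`(d, 2n - a, n)` in place of `(d, n, a)`.
-/

lemma hj_cons (c : ℚ) (l : List ℚ) : hj (c :: l) = c - 1 / hj l := rfl

-- In `IsClassT` the coercion of the list is elaborated through the `List` monad.
lemma isClassT_iff (l : List ℤ) : IsClassT l ↔ (∀ b ∈ l, 2 ≤ b) ∧
    ∃ d n a : ℤ, 1 ≤ d ∧ 2 ≤ n ∧ 1 ≤ a ∧ a < n ∧ Int.gcd n a = 1 ∧
      hj (l.map Int.cast) = (d * n ^ 2 : ℚ) / (d * n * a - 1) := by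
  simp [IsClassT, List.map_eq_flatMap]

def hjMatrix (l : List ℤ) : Matrix (Fin 2) (Fin 2) ℤ :=
  (l.map fun k => !![k, -1; 1, 0]).prod

lemma hjMatrix_cons (k : ℤ) (l : List ℤ) :
    hjMatrix (k :: l) = !![k * hjMatrix l 0 0 - hjMatrix l 1 0, k * hjMatrix l 0 1 - hjMatrix l 1 1;
      hjMatrix l 0 0, hjMatrix l 0 1] := by
  ext i j
  fin_cases i <;> fin_cases j <;> simp [hjMatrix, Matrix.mul_apply, Fin.sum_univ_two] <;> ring

lemma det_hjMatrix (l : List ℤ) : (hjMatrix l).det = 1 := by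
  induction l with
  | nil => simp [hjMatrix]
  | cons k l ih =>
    rw [Matrix.det_fin_two] at ih ⊢
    simp only [hjMatrix_cons, Matrix.of_apply, Matrix.cons_val', Matrix.cons_val_zero,
      Matrix.cons_val_one, Matrix.empty_val', Matrix.cons_val_fin_one]
    linear_combination ih

lemma hjMatrix_bounds {l : List ℤ} (hl : ∀ b ∈ l, 2 ≤ b) :
    0 ≤ hjMatrix l 1 0 ∧ hjMatrix l 1 0 < hjMatrix l 0 0 ∧
      0 < hjMatrix l 1 0 + hjMatrix l 1 1 ∧
      hjMatrix l 1 0 + hjMatrix l 1 1 ≤ hjMatrix l 0 0 + hjMatrix l 0 1 := by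
  induction l with
  | nil => simp [hjMatrix]
  | cons k l ih =>
    have hk : 2 ≤ k := hl k List.mem_cons_self
    obtain ⟨h₁, h₂, h₃, h₄⟩ := ih fun b hb => hl b (List.mem_cons_of_mem k hb)
    simp only [hjMatrix_cons, Matrix.of_apply, Matrix.cons_val', Matrix.cons_val_zero,
      Matrix.cons_val_one, Matrix.empty_val', Matrix.cons_val_fin_one]
    exact ⟨by omega, by nlinarith, by omega, by nlinarith⟩

lemma hj_append_singleton {l : List ℤ} (hl : ∀ b ∈ l, 2 ≤ b) {x : ℤ} (hx : 1 ≤ x) :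
    hj (l.map Int.cast ++ [(x : ℚ)]) =
      ((hjMatrix l 0 0 * x + hjMatrix l 0 1 : ℤ) : ℚ) / (hjMatrix l 1 0 * x + hjMatrix l 1 1 : ℤ) := by
  induction l with
  | nil => simp [hj, hjMatrix]
  | cons k l ih =>
    have hl' : ∀ b ∈ l, 2 ≤ b := fun b hb => hl b (List.mem_cons_of_mem k hb)
    obtain ⟨h₁, h₂, h₃, h₄⟩ := hjMatrix_bounds hl'
    have hpos : (0 : ℚ) < (hjMatrix l 0 0 * x + hjMatrix l 0 1 : ℤ) := by
      exact_mod_cast (by nlinarith [mul_nonneg (h₁.trans h₂.le) (sub_nonneg.2 hx)])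
    rw [List.map_cons, List.cons_append, hj_cons, ih hl', one_div_div, hjMatrix_cons]
    simp only [Matrix.of_apply, Matrix.cons_val', Matrix.cons_val_zero, Matrix.cons_val_one,
      Matrix.empty_val', Matrix.cons_val_fin_one]
    rw [eq_div_iff hpos.ne', sub_mul, div_mul_cancel₀ _ hpos.ne']
    push_cast
    ring

lemma eq_of_mul_sub_mul_eq_one {P Q A C A' C' : ℤ} (h : A * Q - C * P = 1)
    (h' : A' * Q - C' * P = 1) (hA : 0 ≤ A) (hAP : A < P) (hA' : 0 ≤ A') (hA'P : A' < P) :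
    A = A' ∧ C = C' := by
  have hcop : IsCoprime P Q := ⟨-C, A, by linear_combination h⟩
  have hdvd : P ∣ (A - A') * Q := ⟨C - C', by linear_combination h - h'⟩
  have hAA' : A - A' = 0 := Int.eq_zero_of_abs_lt_dvd (hcop.dvd_of_dvd_mul_right hdvd)
    (abs_sub_lt_iff.2 ⟨by omega, by omega⟩)
  have hCC' : (C - C') * P = 0 := by linear_combination h' - h + Q * hAA'
  have := (mul_eq_zero.1 hCC').resolve_right (by omega)
  constructor <;> omega

lemma hj_append_succ_of_classT {L : List ℤ} {m d n a : ℤ} (hL : ∀ b ∈ L, 2 ≤ b) (hm : 2 ≤ m)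
    (hd : 1 ≤ d) (hn : 2 ≤ n) (ha : 1 ≤ a) (han : a < n)
    (hval : hj (L.map Int.cast ++ [(m : ℚ)]) = (d * n ^ 2 : ℚ) / (d * n * a - 1)) :
    hj (L.map Int.cast ++ [((m + 1 : ℤ) : ℚ)]) =
      ((d * n * (2 * n - a) - 1 : ℤ) : ℚ) / (d * a * (2 * n - a) - 2 : ℤ) := by
  rw [hj_append_singleton hL (x := m) (by omega)] at hval
  rw [hj_append_singleton hL (x := m + 1) (by omega)]
  have hdet := det_hjMatrix L
  obtain ⟨h₁, h₂, h₃, h₄⟩ := hjMatrix_bounds hL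
  obtain ⟨p, q, r, s, hM⟩ : ∃ p q r s, hjMatrix L = !![p, q; r, s] :=
    ⟨_, _, _, _, Matrix.eta_fin_two _⟩
  simp only [hM, Matrix.det_fin_two_of, Matrix.of_apply, Matrix.cons_val', Matrix.cons_val_zero,
    Matrix.cons_val_one, Matrix.empty_val', Matrix.cons_val_fin_one] at hval hdet h₁ h₂ h₃ h₄ ⊢
  have hdn : 2 ≤ d * n := by nlinarith
  have hdna : 2 ≤ d * n * a := by nlinarith
  obtain ⟨hP, hQ⟩ : p * m + q = d * n ^ 2 ∧ r * m + s = d * n * a - 1 := by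
    refine Rat.div_int_inj (by nlinarith) (by omega) ?_ ?_ (by rw [hval]; push_cast; rfl)
    · exact Int.isCoprime_iff_nat_coprime.1 ⟨-r, p, by linear_combination hdet⟩
    · exact Int.isCoprime_iff_nat_coprime.1 ⟨d * a ^ 2, -(d * n * a + 1), by ring⟩
  obtain ⟨hp, hr⟩ : p = d * n ^ 2 - d * n * a - 1 ∧ r = d * n * a - 1 - d * a ^ 2 := by
    refine eq_of_mul_sub_mul_eq_one (P := d * n ^ 2) (Q := d * n * a - 1) ?_ ?_ (by omega)
      (by nlinarith) (by nlinarith) (by nlinarith)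
    · rw [← hP, ← hQ]
      linear_combination hdet
    · ring
  congr 2
  · linear_combination hP + hp
  · linear_combination hQ + hr

theorem classT_prepend_two_general (l : List ℤ) (hne : l ≠ []) (hT : IsClassT l) :
    IsClassT (2 :: (l.dropLast ++ [l.getD (l.length - 1) 0 + 1])) := by
  obtain ⟨L, m, rfl⟩ := (List.eq_nil_or_concat' l).resolve_left hne
  have hlast : (L ++ [m]).getD ((L ++ [m]).length - 1) 0 = m := by simp
  rw [List.dropLast_concat, hlast, isClassT_iff]
  rw [isClassT_iff] at hT
  obtain ⟨hge, d, n, a, hd, hn, ha, han, hgcd, hval⟩ := hT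
  rw [List.map_append, List.map_singleton] at hval
  have hL : ∀ b ∈ L, 2 ≤ b := fun b hb => hge b (List.mem_append_left _ hb)
  have hm : 2 ≤ m := hge m (List.mem_append_right _ List.mem_cons_self)
  refine ⟨?_, d, 2 * n - a, n, hd, by omega, by omega, by omega, ?_, ?_⟩
  · intro b hb
    simp only [List.mem_cons, List.mem_append, List.not_mem_nil, or_false] at hb
    rcases hb with rfl | hb | rfl
    exacts [le_rfl, hL b hb, by omega]
  · simpa [sub_eq_add_neg, Int.gcd_comm] using hgcd
  · rw [List.map_cons, List.map_append, List.map_singleton, hj_cons,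
      hj_append_succ_of_classT hL hm hd hn ha han hval]
    have hden : (d * n * (2 * n - a) - 1 : ℚ) ≠ 0 := by
      have hdn : 2 ≤ d * n := by nlinarith
      have : 2 ≤ d * n * (2 * n - a) := by nlinarith
      exact_mod_cast (by omega : d * n * (2 * n - a) - 1 ≠ 0)
    push_cast
    field_simp
    ring

/-- If the chain (b_1, …, b_r) with all b_i ≥ 2 is of class T, then so is the
chain (2, b_1, …, b_{r−1}, b_r + 1), obtained by prepending an entry 2 and
increasing the last entry by 1. -/
theorem classT_prepend_two (l : List ℤ) (hne : l ≠ [])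
    (h2 : ∀ b ∈ l, 2 ≤ b) (hT : IsClassT l) :
    IsClassT (2 :: (l.dropLast ++ [l.getD (l.length - 1) 0 + 1])) :=
  classT_prepend_two_general l hne hT
end

section
/- Let G be a group and let x, a_1, a_2, a_3, a_4, a_5, c_2, c_5 ∈ G satisfy: (i) the elements a_1, a_2, a_3, a_4, a_5, c_2, c_5 pairwise commute; (ii) x commutes with each of a_1, a_4, a_5, and c_5; (iii) the braid relation x·a_3·x = a_3·x·a_3 holds. Set y = (a_2·c_2)·x·(a_2·c_2)⁻¹ and f = x·a_3·x⁻². Then f·(x·y·c_2·c_2·a_1·a_2·a_3·a_4·a_5·c_5)·f⁻¹ = (x·a_3·x⁻¹)·a_2·c_2·a_3·a_3·a_1·a_4·a_5·(f·c_2·f⁻¹)·c_5. (This is the group-theoretic identity underlying the Hurwitz-move and global-conjugation computation transforming the monodromy factorization x y γ_2² α_1α_2α_3α_4α_5γ_5 of the minimal resolution of the icosahedral singularity I_{30(2−2)+29} into t_x(α_3) α_2 γ_2 α_3² α_1 α_4 α_5 f(γ_2) γ_5.) -/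
/-! With `f = x a₃ x⁻²`, the braid relation `x a₃ x = a₃ x a₃` gives `a₃ a₃ f = x a₃`, and
this is the only place where `x` and `a₃` interact. Everything else is commutation
bookkeeping: `w = a₁ a₄ a₅ c₅` commutes with `x`, `a₂`, `a₃`, `c₂`, hence with `f`, so it
splits off both sides; the left-hand product collapses to `x a₂ c₂ x c₂ a₃ w`; and
`f x = x a₃ x⁻¹` turns its conjugate by `f` into the right-hand side. -/

section Braid

variable {G : Type*} [Group G] {x a : G}

theorem mul_self_mul_twist_eq_of_braid (h : x * a * x = a * x * a) :
    a * a * (x * a * x⁻¹ * x⁻¹) = x * a :=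
  calc a * a * (x * a * x⁻¹ * x⁻¹) = a * (a * x * a) * x⁻¹ * x⁻¹ := by group
    _ = a * (x * a * x) * x⁻¹ * x⁻¹ := by rw [h]
    _ = a * x * a * x⁻¹ := by group
    _ = x * a := by rw [← h]; group

theorem Commute.twist_left {g : G} (hx : Commute x g) (ha : Commute a g) :
    Commute (x * a * x⁻¹ * x⁻¹) g :=
  ((hx.mul_left ha).mul_left hx.inv_left).mul_left hx.inv_left

theorem twist_conj_eq_of_braid {b c : G} (h : x * a * x = a * x * a) (hc : Commute c a) :
    (x * a * x⁻¹ * x⁻¹) * (x * b * c * x * c * a) * (x * a * x⁻¹ * x⁻¹)⁻¹ =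
      x * a * x⁻¹ * b * c * a * a *
        ((x * a * x⁻¹ * x⁻¹) * c * (x * a * x⁻¹ * x⁻¹)⁻¹) := by
  have hxca : x * c * a = a * a * (x * a * x⁻¹ * x⁻¹) * c := by
    rw [mul_assoc x, hc.eq, ← mul_assoc]
    exact congrArg (· * c) (mul_self_mul_twist_eq_of_braid h).symm
  calc _ = x * a * x⁻¹ * b * c * (x * c * a) * (x * a * x⁻¹ * x⁻¹)⁻¹ := by group
    _ = _ := by rw [hxca]; group

end Braid

/-- The group-theoretic identity underlying the Hurwitz-move and
global-conjugation computation transforming the monodromy factorization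
x y γ_2² α_1α_2α_3α_4α_5γ_5 of the minimal resolution of the icosahedral
singularity I_{30(2−2)+29} into t_x(α_3) α_2 γ_2 α_3² α_1 α_4 α_5 f(γ_2) γ_5,
where y = t_{α_2}(t_{γ_2}(x)) and f = t_x ∘ t_{α_3} ∘ t_x⁻². -/
theorem icosahedral_monodromy_identity {G : Type*} [Group G]
    (x a1 a2 a3 a4 a5 c2 c5 : G)
    (hpair : ∀ g ∈ ({a1, a2, a3, a4, a5, c2, c5} : Set G),
      ∀ g' ∈ ({a1, a2, a3, a4, a5, c2, c5} : Set G), Commute g g')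
    (hx1 : Commute x a1) (hx4 : Commute x a4) (hx5 : Commute x a5)
    (hxc5 : Commute x c5)
    (hbraid : x * a3 * x = a3 * x * a3) :
    (x * a3 * x⁻¹ * x⁻¹) *
        (x * ((a2 * c2) * x * (a2 * c2)⁻¹) * c2 * c2 * a1 * a2 * a3 * a4 * a5 * c5) *
        (x * a3 * x⁻¹ * x⁻¹)⁻¹ =
      (x * a3 * x⁻¹) * a2 * c2 * a3 * a3 * a1 * a4 * a5 *
        ((x * a3 * x⁻¹ * x⁻¹) * c2 * (x * a3 * x⁻¹ * x⁻¹)⁻¹) * c5 := by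
  have hS : ∀ {g g'}, g ∈ ({a1, a2, a3, a4, a5, c2, c5} : Set G) →
      g' ∈ ({a1, a2, a3, a4, a5, c2, c5} : Set G) → Commute g g' :=
    fun hg hg' => hpair _ hg _ hg'
  have hxv : Commute x (a1 * a4 * a5) := (hx1.mul_right hx4).mul_right hx5
  have ha3v : Commute a3 (a1 * a4 * a5) :=
    ((hS (by simp) (by simp)).mul_right (hS (by simp) (by simp))).mul_right
      (hS (by simp) (by simp))
  have hc2v : Commute c2 (a1 * a4 * a5) :=
    ((hS (by simp) (by simp)).mul_right (hS (by simp) (by simp))).mul_right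
      (hS (by simp) (by simp))
  have hfv := hxv.twist_left ha3v
  have hfw := (hxv.mul_right hxc5).twist_left (ha3v.mul_right (hS (by simp) (by simp)))
  have hlhs : x * ((a2 * c2) * x * (a2 * c2)⁻¹) * c2 * c2 * a1 * a2 * a3 * a4 * a5 * c5 =
      x * a2 * c2 * x * c2 * a3 * (a1 * a4 * a5 * c5) := by
    have h2 : Commute (c2 * c2 * a1) a2 :=
      ((hS (by simp) (by simp)).mul_left (hS (by simp) (by simp))).mul_left
        (hS (by simp) (by simp))
    calc _ = x * (a2 * c2) * x * (a2 * c2)⁻¹ * (c2 * c2 * a1 * a2) * a3 * (a4 * a5 * c5) := by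
          group
      _ = x * a2 * c2 * x * c2 * (a1 * a3) * (a4 * a5 * c5) := by rw [h2.eq]; group
      _ = _ := by rw [(hS (by simp) (by simp) : Commute a1 a3).eq]; group
  set f := x * a3 * x⁻¹ * x⁻¹
  have hrhs : x * a3 * x⁻¹ * a2 * c2 * a3 * a3 * a1 * a4 * a5 * (f * c2 * f⁻¹) * c5 =
      x * a3 * x⁻¹ * a2 * c2 * a3 * a3 * (f * c2 * f⁻¹) * (a1 * a4 * a5 * c5) := by
    calc _ = x * a3 * x⁻¹ * a2 * c2 * a3 * a3 * (a1 * a4 * a5 * (f * c2 * f⁻¹)) * c5 := by group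
      _ = _ := by rw [← ((hfv.mul_left hc2v).mul_left hfv.inv_left).eq]; group
  calc _ = f * (x * a2 * c2 * x * c2 * a3) * f⁻¹ * (f * (a1 * a4 * a5 * c5) * f⁻¹) := by
        rw [hlhs, conj_mul]
    _ = x * a3 * x⁻¹ * a2 * c2 * a3 * a3 * (f * c2 * f⁻¹) * (a1 * a4 * a5 * c5) := by
        rw [twist_conj_eq_of_braid hbraid (hS (by simp) (by simp)), hfw.mul_inv_cancel]
    _ = _ := hrhs.symm
end

section
/- Let G be a group and let x, a_1, a_2, a_3, a_4, c_3, c_4 ∈ G satisfy: (i) the elements a_1, a_2, a_3, a_4, c_3, c_4 pairwise commute; (ii) x commutes with each of a_1, a_2, and c_4; (iii) the braid relation x·a_4·x = a_4·x·a_4 holds. Set y = (a_3·c_3)·x·(a_3·c_3)⁻¹ and f = x·a_4·x⁻². Then f·(x·y·c_3·c_3·a_1·a_2·a_3·a_4·c_4)·f⁻¹ = (x·a_4·x⁻¹)·a_3·c_3·a_4·a_4·a_1·a_2·(f·c_3·f⁻¹)·c_4. (This is the group-theoretic identity underlying the Hurwitz-move and global-conjugation computation transforming the monodromy factorization x y γ_3²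 α_1α_2α_3α_4γ_4 of the minimal resolution of the octahedral singularity O_{12(2−2)+11} into t_x(α_4) α_3 γ_3 α_4² α_1 α_2 f(γ_3) γ_4.) -/
/-!
Write `f = x a₄ x⁻²`. Since `x`, `a₄` commute with `a₁`, `a₂`, `c₄`, so does `f`, and these
factors can be pulled out of the conjugation on both sides. Conjugating `x` by `a₃ c₃` and
cancelling gives `x y c₃² a₃ = x a₃ c₃ x c₃`, and `f x = x a₄ x⁻¹`. What remains is
`x c₃ a₄ = a₄² f c₃`, which is `x a₄ x² = a₄² x a₄`, a consequence of the braid relation.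
-/

theorem braid_mul_sq {S : Type*} [Semigroup S] {x a : S} (h : x * a * x = a * x * a) :
    x * a * x * x = a * a * x * a := by
  rw [h]; simp only [mul_assoc]; rw [← mul_assoc x a x, h]; simp only [mul_assoc]

theorem sq_mul_braid_twist {G : Type*} [Group G] {x a : G} (h : x * a * x = a * x * a) :
    a * a * (x * a * x⁻¹ * x⁻¹) = x * a :=
  calc _ = a * a * x * a * x⁻¹ * x⁻¹ := by group
    _ = x * a := by rw [← braid_mul_sq h]; group

theorem mul_conj_mul_sq_mul {G : Type*} [Group G] {a c : G} (h : Commute a c) (x : G) :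
    x * ((a * c) * x * (a * c)⁻¹) * c * c * a = x * a * c * x * c :=
  calc _ = x * a * c * x * c⁻¹ * (a⁻¹ * (c * c) * a) := by group
    _ = _ := by rw [(h.mul_right h).inv_mul_cancel]; group

theorem braid_twist_conj {G : Type*} [Group G] {x a c : G} (hbraid : x * a * x = a * x * a)
    (hac : Commute a c) (d : G) :
    (x * a * x⁻¹ * x⁻¹) * (x * d * c * x * c * a) * (x * a * x⁻¹ * x⁻¹)⁻¹ =
      x * a * x⁻¹ * d * c * a * a *
        ((x * a * x⁻¹ * x⁻¹) * c * (x * a * x⁻¹ * x⁻¹)⁻¹) := by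
  calc _ = x * a * x⁻¹ * d * c * (x * (c * a)) * (x * a * x⁻¹ * x⁻¹)⁻¹ := by group
    _ = x * a * x⁻¹ * d * c * (a * a * (x * a * x⁻¹ * x⁻¹) * c) *
          (x * a * x⁻¹ * x⁻¹)⁻¹ := by
          rw [sq_mul_braid_twist hbraid, ← hac.eq, mul_assoc x a c]
    _ = _ := by group

theorem commute_braid_twist {G : Type*} [Group G] {x a e : G} (hx : Commute x e)
    (ha : Commute a e) : Commute (x * a * x⁻¹ * x⁻¹) e :=
  ((hx.mul_left ha).mul_left hx.inv_left).mul_left hx.inv_left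

theorem conj_mul_of_commute {G : Type*} [Group G] {f e : G} (h : Commute f e) (w : G) :
    f * (w * e) * f⁻¹ = f * w * f⁻¹ * e := by
  conv_rhs => rw [← h.mul_inv_cancel]
  group

/-- The group-theoretic identity underlying the Hurwitz-move and
global-conjugation computation transforming the monodromy factorization
x y γ_3² α_1α_2α_3α_4γ_4 of the minimal resolution of the octahedral
singularity O_{12(2−2)+11} into t_x(α_4) α_3 γ_3 α_4² α_1 α_2 f(γ_3) γ_4,
where y = t_{α_3}(t_{γ_3}(x)) and f = t_x ∘ t_{α_4} ∘ t_x⁻². -/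
theorem octahedral_monodromy_identity {G : Type*} [Group G]
    (x a1 a2 a3 a4 c3 c4 : G)
    (hpair : ∀ g ∈ ({a1, a2, a3, a4, c3, c4} : Set G),
      ∀ g' ∈ ({a1, a2, a3, a4, c3, c4} : Set G), Commute g g')
    (hx1 : Commute x a1) (hx2 : Commute x a2) (hxc4 : Commute x c4)
    (hbraid : x * a4 * x = a4 * x * a4) :
    (x * a4 * x⁻¹ * x⁻¹) *
        (x * ((a3 * c3) * x * (a3 * c3)⁻¹) * c3 * c3 * a1 * a2 * a3 * a4 * c4) *
        (x * a4 * x⁻¹ * x⁻¹)⁻¹ =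
      (x * a4 * x⁻¹) * a3 * c3 * a4 * a4 * a1 * a2 *
        ((x * a4 * x⁻¹ * x⁻¹) * c3 * (x * a4 * x⁻¹ * x⁻¹)⁻¹) * c4 := by
  have comm {g g' : G} (hg : g ∈ ({a1, a2, a3, a4, c3, c4} : Set G))
      (hg' : g' ∈ ({a1, a2, a3, a4, c3, c4} : Set G)) : Commute g g' := hpair g hg g' hg'
  have h3c3 : Commute a3 c3 := comm (by simp) (by simp)
  have h4c3 : Commute a4 c3 := comm (by simp) (by simp)
  have h4c4 : Commute a4 c4 := comm (by simp) (by simp)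
  have hb3 : Commute (a1 * a2) a3 := (comm (by simp) (by simp)).mul_left (comm (by simp) (by simp))
  have hb4 : Commute (a1 * a2) a4 := (comm (by simp) (by simp)).mul_left (comm (by simp) (by simp))
  have hc3b : Commute c3 (a1 * a2) :=
    (comm (by simp) (by simp)).mul_right (comm (by simp) (by simp))
  set f := x * a4 * x⁻¹ * x⁻¹
  have hfb : Commute f (a1 * a2) := commute_braid_twist (hx1.mul_right hx2) hb4.symm
  have hfc4 : Commute f c4 := commute_braid_twist hxc4 h4c4
  have hinner : x * ((a3 * c3) * x * (a3 * c3)⁻¹) * c3 * c3 * a1 * a2 * a3 * a4 * c4 =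
      x * a3 * c3 * x * c3 * a4 * (a1 * a2 * c4) := by
    rw [mul_assoc _ a1 a2, mul_assoc _ (a1 * a2) a3, hb3.eq, ← mul_assoc,
      mul_assoc _ (a1 * a2) a4, hb4.eq, ← mul_assoc, mul_conj_mul_sq_mul h3c3]
    simp only [mul_assoc]
  calc f * (x * ((a3 * c3) * x * (a3 * c3)⁻¹) * c3 * c3 * a1 * a2 * a3 * a4 * c4) * f⁻¹
      = f * (x * a3 * c3 * x * c3 * a4) * f⁻¹ * (a1 * a2) * c4 := by
        rw [hinner, conj_mul_of_commute (hfb.mul_right hfc4), mul_assoc _ (a1 * a2) c4]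
    _ = x * a4 * x⁻¹ * a3 * c3 * a4 * a4 * (f * c3 * f⁻¹) * (a1 * a2) * c4 := by
        rw [braid_twist_conj hbraid h4c3]
    _ = _ := by
        rw [mul_assoc _ (f * c3 * f⁻¹), ((hfb.mul_left hc3b).mul_left hfb.inv_left).eq]
        simp only [mul_assoc]
end
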